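/- arXiv:2011.02724 — 3 statements merged into one kernel-verified Lean document; each statement's English description precedes it below -/
import Mathlib

section
/- Let F_q be a finite field, k a positive integer, F = (F_1, …, F_{2k−1}) a full flag on F_q^{2k}, and T a subgroup of GL(2k, q). Suppose that any two distinct subspaces in Orb_T(F_k) intersect trivially, and that Stab_T(F_k) ⊆ Stab_T(F_i) for every i ∈ {1, …, 2k−1}. Then the orbit flag code Orb_T(F) is an optimum distance full flag code: any two distinct flags in Orb_T(F) have flag distance exactly 2k² (the maximum possible); moreover |Orb_T(F)| = |Orb_T(F_k)|. -/
open Module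

/-- The action of `A ∈ GL(n, F)` on subspaces of `F^n`: `U · A` is the image of `U`
under the invertible linear map given by the matrix `A`. -/
noncomputable def mapGL {F : Type*} [Field F] {n : ℕ}
    (A : GL (Fin n) F) (U : Submodule F (Fin n → F)) : Submodule F (Fin n → F) :=
  U.map (Matrix.toLin' (A : Matrix (Fin n) (Fin n) F))

/-- The subspace distance `d_S(U, W) = dim U + dim W − 2 dim(U ∩ W)`. -/
noncomputable def subspaceDist {F V : Type*} [Field F] [AddCommGroup V] [Module F V]
    (U W : Submodule F V) : ℕ :=
  finrank F U + finrank F W - 2 * finrank F ↥(U ⊓ W)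

/- Auxiliary material -/

noncomputable def glEquiv {F : Type*} [Field F] {n : ℕ} (A : GL (Fin n) F) :
    (Fin n → F) ≃ₗ[F] (Fin n → F) :=
  LinearEquiv.ofLinear (Matrix.toLin' (A : Matrix (Fin n) (Fin n) F))
    (Matrix.toLin' ((A⁻¹ : GL (Fin n) F) : Matrix (Fin n) (Fin n) F))
    (by rw [← Matrix.toLin'_mul, ← Units.val_mul, mul_inv_cancel, Units.val_one,
      Matrix.toLin'_one])
    (by rw [← Matrix.toLin'_mul, ← Units.val_mul, inv_mul_cancel, Units.val_one,
      Matrix.toLin'_one])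

lemma mapGL_eq_map_glEquiv {F : Type*} [Field F] {n : ℕ} (A : GL (Fin n) F)
    (U : Submodule F (Fin n → F)) :
    mapGL A U = U.map (glEquiv A : (Fin n → F) →ₗ[F] (Fin n → F)) := rfl

lemma finrank_mapGL {F : Type*} [Field F] {n : ℕ} (A : GL (Fin n) F)
    (U : Submodule F (Fin n → F)) : finrank F (mapGL A U) = finrank F U := by
  rw [mapGL_eq_map_glEquiv]
  exact LinearEquiv.finrank_map_eq (glEquiv A) U

lemma mapGL_mul {F : Type*} [Field F] {n : ℕ} (A B : GL (Fin n) F)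
    (U : Submodule F (Fin n → F)) : mapGL (A * B) U = mapGL A (mapGL B U) := by
  unfold mapGL
  rw [Units.val_mul, Matrix.toLin'_mul, Submodule.map_comp]

lemma mapGL_one {F : Type*} [Field F] {n : ℕ} (U : Submodule F (Fin n → F)) :
    mapGL (1 : GL (Fin n) F) U = U := by
  unfold mapGL
  rw [Units.val_one, Matrix.toLin'_one, Submodule.map_id]

lemma mapGL_inv_mapGL {F : Type*} [Field F] {n : ℕ} (A : GL (Fin n) F)
    (U : Submodule F (Fin n → F)) : mapGL A⁻¹ (mapGL A U) = U := by
  rw [← mapGL_mul, inv_mul_cancel, mapGL_one]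

lemma mapGL_mono {F : Type*} [Field F] {n : ℕ} (A : GL (Fin n) F)
    {U W : Submodule F (Fin n → F)} (h : U ≤ W) : mapGL A U ≤ mapGL A W :=
  Submodule.map_mono h

lemma two_mul_sum_range_succ (n : ℕ) :
    2 * ∑ i ∈ Finset.range n, (i + 1) = n * (n + 1) := by
  induction n with
  | zero => simp
  | succ n ih => rw [Finset.sum_range_succ, Nat.mul_add, ih]; ring

lemma sum_min_eq (k : ℕ) (hk : 0 < k) :
    ∑ i ∈ Finset.range (2 * k - 1), 2 * min (i + 1) (2 * k - (i + 1)) = 2 * k ^ 2 := by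
  obtain ⟨m, rfl⟩ : ∃ m, k = m + 1 := ⟨k - 1, by omega⟩
  have hsplit : 2 * (m + 1) - 1 = (m + 1) + m := by omega
  rw [hsplit, Finset.sum_range_add]
  have h1 : ∀ i ∈ Finset.range (m + 1),
      2 * min (i + 1) (2 * (m + 1) - (i + 1)) = 2 * (i + 1) := by
    intro i hi
    simp only [Finset.mem_range] at hi
    have : min (i + 1) (2 * (m + 1) - (i + 1)) = i + 1 := by omega
    rw [this]
  have h2 : ∀ i ∈ Finset.range m,
      2 * min ((m + 1) + i + 1) (2 * (m + 1) - ((m + 1) + i + 1)) = 2 * (m - i) := by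
    intro i hi
    simp only [Finset.mem_range] at hi
    have : min ((m + 1) + i + 1) (2 * (m + 1) - ((m + 1) + i + 1)) = m - i := by omega
    rw [this]
  rw [Finset.sum_congr rfl h1, Finset.sum_congr rfl h2]
  have h3 : ∑ i ∈ Finset.range m, 2 * (m - i) = ∑ i ∈ Finset.range m, 2 * (i + 1) := by
    have := Finset.sum_range_reflect (fun i => 2 * (i + 1)) m
    calc ∑ i ∈ Finset.range m, 2 * (m - i)
        = ∑ i ∈ Finset.range m, 2 * (m - 1 - i + 1) := by
          refine Finset.sum_congr rfl fun i hi => ?_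
          simp only [Finset.mem_range] at hi
          congr 1
          omega
      _ = ∑ i ∈ Finset.range m, 2 * (i + 1) := this
  rw [h3, ← Finset.mul_sum, ← Finset.mul_sum, two_mul_sum_range_succ, two_mul_sum_range_succ]
  ring

/-- Let `F = (F_1, …, F_{2k−1})` be a full flag on `F_q^{2k}` and `T` a
subgroup of `GL(2k, q)` such that any two distinct subspaces in `Orb_T(F_k)` intersect
trivially and `Stab_T(F_k) ⊆ Stab_T(F_i)` for every `i`. Then any two distinct flags in
the orbit flag code `Orb_T(F)` are at flag distance `2k²` (the maximum possible), and
`|Orb_T(F)| = |Orb_T(F_k)|`. -/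
theorem orbit_flag_code_optimum_distance
    {F : Type*} [Field F] [Fintype F] {k : ℕ} (hk : 0 < k)
    (Fl : ℕ → Submodule F (Fin (2 * k) → F))
    (hdim : ∀ i, 1 ≤ i → i ≤ 2 * k - 1 → finrank F (Fl i) = i)
    (hmono : ∀ i j, 1 ≤ i → i < j → j ≤ 2 * k - 1 → Fl i < Fl j)
    (T : Subgroup (GL (Fin (2 * k)) F))
    (hmax : ∀ A ∈ T, ∀ B ∈ T,
      mapGL A (Fl k) ≠ mapGL B (Fl k) → mapGL A (Fl k) ⊓ mapGL B (Fl k) = ⊥)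
    (hstab : ∀ A ∈ T, mapGL A (Fl k) = Fl k →
      ∀ i, 1 ≤ i → i ≤ 2 * k - 1 → mapGL A (Fl i) = Fl i) :
    (∀ G ∈ {G : Fin (2 * k - 1) → Submodule F (Fin (2 * k) → F) |
        ∃ A ∈ T, G = fun j => mapGL A (Fl (j.val + 1))},
     ∀ G' ∈ {G : Fin (2 * k - 1) → Submodule F (Fin (2 * k) → F) |
        ∃ A ∈ T, G = fun j => mapGL A (Fl (j.val + 1))},
      G ≠ G' → ∑ j : Fin (2 * k - 1), subspaceDist (G j) (G' j) = 2 * k ^ 2)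
    ∧ {G : Fin (2 * k - 1) → Submodule F (Fin (2 * k) → F) |
        ∃ A ∈ T, G = fun j => mapGL A (Fl (j.val + 1))}.ncard
      = {U : Submodule F (Fin (2 * k) → F) | ∃ A ∈ T, U = mapGL A (Fl k)}.ncard := by
  have hk1 : 1 ≤ k := hk
  have hk2 : k ≤ 2 * k - 1 := by omega
  -- key lemma: if A and B agree at level k then they agree at all levels
  have key : ∀ A ∈ T, ∀ B ∈ T, mapGL A (Fl k) = mapGL B (Fl k) →
      ∀ i, 1 ≤ i → i ≤ 2 * k - 1 → mapGL A (Fl i) = mapGL B (Fl i) := by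
    intro A hA B hB h i hi1 hi2
    have hC : B⁻¹ * A ∈ T := mul_mem (inv_mem hB) hA
    have hCk : mapGL (B⁻¹ * A) (Fl k) = Fl k := by
      rw [mapGL_mul, h, mapGL_inv_mapGL]
    have := hstab (B⁻¹ * A) hC hCk i hi1 hi2
    calc mapGL A (Fl i) = mapGL (B * (B⁻¹ * A)) (Fl i) := by rw [mul_inv_cancel_left]
      _ = mapGL B (mapGL (B⁻¹ * A) (Fl i)) := mapGL_mul _ _ _
      _ = mapGL B (Fl i) := by rw [this]
  have hambient : finrank F (Fin (2 * k) → F) = 2 * k := finrank_fin_fun F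
  constructor
  · rintro G ⟨A, hA, rfl⟩ G' ⟨B, hB, rfl⟩ hne
    -- the middle subspaces differ
    have hmid : mapGL A (Fl k) ≠ mapGL B (Fl k) := by
      intro h
      apply hne
      funext j
      exact key A hA B hB h (j.val + 1) (by omega) (by omega)
    have hinf : mapGL A (Fl k) ⊓ mapGL B (Fl k) = ⊥ := hmax A hA B hB hmid
    have hdA : ∀ i, 1 ≤ i → i ≤ 2 * k - 1 → finrank F (mapGL A (Fl i)) = i :=
      fun i h1 h2 => (finrank_mapGL A (Fl i)).trans (hdim i h1 h2)
    have hdB : ∀ i, 1 ≤ i → i ≤ 2 * k - 1 → finrank F (mapGL B (Fl i)) = i :=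
      fun i h1 h2 => (finrank_mapGL B (Fl i)).trans (hdim i h1 h2)
    have hsupk : mapGL A (Fl k) ⊔ mapGL B (Fl k) = ⊤ := by
      apply Submodule.eq_top_of_disjoint
      · rw [hdA k hk1 hk2, hdB k hk1 hk2, hambient]; omega
      · exact disjoint_iff.mpr hinf
    have hterm : ∀ j : Fin (2 * k - 1),
        subspaceDist (mapGL A (Fl (j.val + 1))) (mapGL B (Fl (j.val + 1)))
          = 2 * min (j.val + 1) (2 * k - (j.val + 1)) := by
      intro j
      set i := j.val + 1 with hi
      have hi1 : 1 ≤ i := by omega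
      have hi2 : i ≤ 2 * k - 1 := by have := j.isLt; omega
      rcases le_or_gt i k with hik | hik
      · -- low levels: trivial intersection
        have hsub : Fl i ≤ Fl k := by
          rcases eq_or_lt_of_le hik with h | h
          · rw [h]
          · exact (hmono i k hi1 h hk2).le
        have h0 : mapGL A (Fl i) ⊓ mapGL B (Fl i) = ⊥ := by
          refine le_bot_iff.mp ?_
          rw [← hinf]
          exact inf_le_inf (mapGL_mono A hsub) (mapGL_mono B hsub)
        rw [subspaceDist, h0, hdA i hi1 hi2, hdB i hi1 hi2, finrank_bot]
        omega
      · -- high levels: sum is everything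
        have hsub : Fl k ≤ Fl i := (hmono k i hk1 hik hi2).le
        have htop : mapGL A (Fl i) ⊔ mapGL B (Fl i) = ⊤ := by
          refine top_le_iff.mp ?_
          rw [← hsupk]
          exact sup_le_sup (mapGL_mono A hsub) (mapGL_mono B hsub)
        have hsum := Submodule.finrank_sup_add_finrank_inf_eq
          (mapGL A (Fl i)) (mapGL B (Fl i))
        rw [htop, finrank_top, hambient, hdA i hi1 hi2, hdB i hi1 hi2] at hsum
        rw [subspaceDist, hdA i hi1 hi2, hdB i hi1 hi2]
        omega
    calc ∑ j : Fin (2 * k - 1),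
          subspaceDist (mapGL A (Fl (j.val + 1))) (mapGL B (Fl (j.val + 1)))
        = ∑ j : Fin (2 * k - 1), 2 * min (j.val + 1) (2 * k - (j.val + 1)) :=
          Finset.sum_congr rfl fun j _ => hterm j
      _ = ∑ i ∈ Finset.range (2 * k - 1), 2 * min (i + 1) (2 * k - (i + 1)) :=
          Fin.sum_univ_eq_sum_range (fun i => 2 * min (i + 1) (2 * k - (i + 1))) (2 * k - 1)
      _ = 2 * k ^ 2 := sum_min_eq k hk
  · -- cardinality
    have hklt : k - 1 < 2 * k - 1 := by omega
    have hks : k - 1 + 1 = k := by omega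
    set f : (Fin (2 * k - 1) → Submodule F (Fin (2 * k) → F)) → Submodule F (Fin (2 * k) → F) :=
      fun G => G ⟨k - 1, hklt⟩ with hf
    have himg : {U : Submodule F (Fin (2 * k) → F) | ∃ A ∈ T, U = mapGL A (Fl k)}
        = f '' {G : Fin (2 * k - 1) → Submodule F (Fin (2 * k) → F) |
            ∃ A ∈ T, G = fun j => mapGL A (Fl (j.val + 1))} := by
      ext U
      constructor
      · rintro ⟨A, hA, rfl⟩
        exact ⟨fun j => mapGL A (Fl (j.val + 1)), ⟨A, hA, rfl⟩, by simp [hf, hks]⟩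
      · rintro ⟨G, ⟨A, hA, rfl⟩, rfl⟩
        exact ⟨A, hA, by simp [hf, hks]⟩
    have hinj : Set.InjOn f {G : Fin (2 * k - 1) → Submodule F (Fin (2 * k) → F) |
        ∃ A ∈ T, G = fun j => mapGL A (Fl (j.val + 1))} := by
      rintro G ⟨A, hA, rfl⟩ G' ⟨B, hB, rfl⟩ h
      simp only [hf, hks] at h
      funext j
      exact key A hA B hB h (j.val + 1) (by omega) (by have := j.isLt; omega)
    rw [himg, Set.ncard_image_of_injOn hinj]
end

section
/- Let L be a finite field with char(L) ≠ 2, and let Ḡ be the subgroup of GL(2, L) generated by the matrix S₀ = [[0,1],[1,0]] together with all matrices [[1,b],[0,1]] with b ∈ L, b ≠ 0. Then Ḡ is the internal semidirect product of SL(2, L) by ⟨S₀⟩: SL(2, L) is a normal subgroup of Ḡ, S₀ ∈ Ḡ has order 2 and S₀ ∉ SL(2, L), SL(2, L) ∩ ⟨S₀⟩ is trivial, and every element of Ḡ can be written as A·S₀^ε with A ∈ SL(2, L) and ε ∈ {0, 1}. -/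
/-- The permutation matrix `S₀ = [[0,1],[1,0]]` as an element of `GL(2, L)`. -/
def swapGL (L : Type*) [Field L] : GL (Fin 2) L :=
  ⟨!![0, 1; 1, 0], !![0, 1; 1, 0],
    by simp [Matrix.mul_fin_two, Matrix.one_fin_two],
    by simp [Matrix.mul_fin_two, Matrix.one_fin_two]⟩

/-- The transvection `[[1,b],[0,1]]` as an element of `GL(2, L)`. -/
def transvGL {L : Type*} [Field L] (b : L) : GL (Fin 2) L :=
  ⟨!![1, b; 0, 1], !![1, -b; 0, 1],
    by simp [Matrix.mul_fin_two, Matrix.one_fin_two],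
    by simp [Matrix.mul_fin_two, Matrix.one_fin_two]⟩

/-- The subgroup `Ḡ ≤ GL(2, L)` generated by `S₀` and the transvections `[[1,b],[0,1]]`,
`b ≠ 0`. -/
def Gbar (L : Type*) [Field L] : Subgroup (GL (Fin 2) L) :=
  Subgroup.closure ({swapGL L} ∪ {A | ∃ b : L, b ≠ 0 ∧ A = transvGL b})

/-- The special linear group `SL(2, L) = {A ∈ GL(2, L) : det A = 1}`, as a subgroup of
`GL(2, L)`. -/
def SL2 (L : Type*) [Field L] : Subgroup (GL (Fin 2) L) where
  carrier := {A | Matrix.det (A : Matrix (Fin 2) (Fin 2) L) = 1}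
  one_mem' := by simp
  mul_mem' := by
    intro a b ha hb
    simp only [Set.mem_setOf_eq, Units.val_mul, Matrix.det_mul] at *
    rw [ha, hb, one_mul]
  inv_mem' := by
    intro A hA
    simp only [Set.mem_setOf_eq] at *
    have h : Matrix.det ((A⁻¹ : GL (Fin 2) L) : Matrix (Fin 2) (Fin 2) L)
        * Matrix.det ((A : GL (Fin 2) L) : Matrix (Fin 2) (Fin 2) L) = 1 := by
      rw [← Matrix.det_mul, ← Units.val_mul, inv_mul_cancel A, Units.val_one, Matrix.det_one]
    rw [hA, mul_one] at h
    exact h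

/-!
The determinant maps the generators of `Ḡ` to `±1`, so `det Ḡ ⊆ {±1}`. Conversely, a matrix
`[[a,b],[c,d]] ∈ SL(2, L)` with `c ≠ 0` factors as
`[[1,(a-1)/c],[0,1]] · [[1,0],[c,1]] · [[1,(d-1)/c],[0,1]]` with `[[1,0],[c,1]] = S₀ [[1,c],[0,1]] S₀`,
and when `c = 0` the matrix `[[1,0],[1,1]] · A` has lower-left entry `a ≠ 0`. Since `det S₀ = -1 ≠ 1`
in characteristic `≠ 2` and `S₀² = 1`, the group `⟨S₀⟩ = {1, S₀}` meets `SL(2, L)` trivially, and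
every `g ∈ Ḡ` is `g` or `(g S₀) S₀`.
-/

theorem Subgroup.inf_zpowers_eq_bot_of_orderOf_eq_two {G : Type*} [Group G] {H : Subgroup G}
    {g : G} (hg : orderOf g = 2) (hgH : g ∉ H) : H ⊓ zpowers g = ⊥ := by
  rw [eq_bot_iff]
  rintro _ ⟨hH, hk⟩
  obtain ⟨k, rfl⟩ := Subgroup.mem_zpowers_iff.1 hk
  rw [← zpow_mod_orderOf, hg, Nat.cast_ofNat] at hH ⊢
  rcases Int.emod_two_eq_zero_or_one k with h | h
  · simp [h]
  · rw [h, zpow_one] at hH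
    exact absurd hH hgH

open Matrix

section

variable {L : Type*} [Field L]

lemma SL2_eq_ker_det : SL2 L = (GeneralLinearGroup.det : GL (Fin 2) L →* Lˣ).ker := by
  ext A
  rw [MonoidHom.mem_ker, Units.ext_iff, GeneralLinearGroup.val_det_apply]
  rfl

lemma SL2_normal : (SL2 L).Normal :=
  SL2_eq_ker_det (L := L) ▸ MonoidHom.normal_ker _

lemma mem_SL2_iff {A : GL (Fin 2) L} : A ∈ SL2 L ↔ GeneralLinearGroup.det A = 1 := by
  rw [SL2_eq_ker_det, MonoidHom.mem_ker]

lemma det_swapGL : GeneralLinearGroup.det (swapGL L) = -1 := by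
  ext; simp [swapGL, det_fin_two_of]

lemma det_transvGL (b : L) : GeneralLinearGroup.det (transvGL b) = 1 := by
  ext; simp [transvGL, det_fin_two_of]

lemma swapGL_sq : swapGL L ^ 2 = 1 := by
  ext i j; fin_cases i <;> fin_cases j <;> simp [sq, swapGL]

lemma swapGL_ne_one : swapGL L ≠ 1 := fun h => by
  simpa [swapGL] using congrArg (fun A : GL (Fin 2) L => (A : Matrix (Fin 2) (Fin 2) L) 0 0) h

lemma orderOf_swapGL : orderOf (swapGL L) = 2 :=
  orderOf_eq_prime swapGL_sq swapGL_ne_one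

lemma transvGL_zero : transvGL (0 : L) = 1 := by
  ext i j; fin_cases i <;> fin_cases j <;> simp [transvGL]

lemma swapGL_mem_Gbar : swapGL L ∈ Gbar L :=
  Subgroup.subset_closure (Or.inl rfl)

lemma transvGL_mem_Gbar (b : L) : transvGL b ∈ Gbar L := by
  rcases eq_or_ne b 0 with rfl | hb
  · exact transvGL_zero (L := L) ▸ one_mem _
  · exact Subgroup.subset_closure (Or.inr ⟨b, hb, rfl⟩)

lemma swapGL_mul_transvGL_mul_swapGL (c : L) :
    ((swapGL L * transvGL c * swapGL L : GL (Fin 2) L) : Matrix (Fin 2) (Fin 2) L) =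
      !![1, 0; c, 1] := by
  ext i j; fin_cases i <;> fin_cases j <;> simp [swapGL, transvGL]

lemma lowerTransv_mem_Gbar (c : L) : swapGL L * transvGL c * swapGL L ∈ Gbar L :=
  mul_mem (mul_mem swapGL_mem_Gbar (transvGL_mem_Gbar c)) swapGL_mem_Gbar

lemma lowerTransv_mem_SL2 (c : L) : swapGL L * transvGL c * swapGL L ∈ SL2 L := by
  simp [mem_SL2_iff, det_swapGL, det_transvGL]

lemma mem_Gbar_of_mem_SL2_of_ne_zero {A : GL (Fin 2) L} (hA : A ∈ SL2 L)
    (hc : (A : Matrix (Fin 2) (Fin 2) L) 1 0 ≠ 0) : A ∈ Gbar L := by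
  obtain ⟨a, b, c, d, hM⟩ : ∃ a b c d : L, (A : Matrix (Fin 2) (Fin 2) L) = !![a, b; c, d] :=
    ⟨_, _, _, _, eta_fin_two _⟩
  have hdet : a * d - b * c = 1 := by rw [← det_fin_two_of, ← hM]; exact hA
  replace hc : c ≠ 0 := by simpa [hM] using hc
  obtain rfl : b = (a * d - 1) / c := eq_div_of_mul_eq hc (by linear_combination -hdet)
  have hfac : A = transvGL ((a - 1) / c) * (swapGL L * transvGL c * swapGL L) *
      transvGL ((d - 1) / c) := by
    ext i j
    rw [Units.val_mul, Units.val_mul, swapGL_mul_transvGL_mul_swapGL, hM]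
    fin_cases i <;> fin_cases j <;> simp [transvGL] <;> field_simp <;> ring
  rw [hfac]
  exact mul_mem (mul_mem (transvGL_mem_Gbar _) (lowerTransv_mem_Gbar _)) (transvGL_mem_Gbar _)

lemma SL2_le_Gbar : SL2 L ≤ Gbar L := by
  intro A hA
  rcases ne_or_eq ((A : Matrix (Fin 2) (Fin 2) L) 1 0) 0 with hc | hc
  · exact mem_Gbar_of_mem_SL2_of_ne_zero hA hc
  have ha : (A : Matrix (Fin 2) (Fin 2) L) 0 0 ≠ 0 := by
    intro ha0
    have hdet : (A : Matrix (Fin 2) (Fin 2) L).det = 1 := hA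
    simp [det_fin_two, ha0, hc] at hdet
  have hNA : (swapGL L * transvGL 1 * swapGL L) * A ∈ Gbar L := by
    refine mem_Gbar_of_mem_SL2_of_ne_zero (mul_mem (lowerTransv_mem_SL2 1) hA) ?_
    rw [Units.val_mul, swapGL_mul_transvGL_mul_swapGL]
    simpa [mul_apply, Fin.sum_univ_two, hc] using ha
  exact (Subgroup.mul_mem_cancel_left _ (lowerTransv_mem_Gbar 1)).1 hNA

lemma Gbar_le_comap_det :
    Gbar L ≤ (Subgroup.zpowers (-1 : Lˣ)).comap GeneralLinearGroup.det := by
  rw [Gbar, Subgroup.closure_le]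
  rintro _ (rfl | ⟨b, -, rfl⟩)
  · exact ⟨1, by simp [det_swapGL]⟩
  · simp [det_transvGL]

lemma det_eq_one_or_neg_one_of_mem_Gbar {g : GL (Fin 2) L} (hg : g ∈ Gbar L) :
    GeneralLinearGroup.det g = 1 ∨ GeneralLinearGroup.det g = -1 := by
  obtain ⟨k, hk⟩ := Gbar_le_comap_det hg
  rw [← hk]
  exact (Int.even_or_odd k).imp Even.neg_one_zpow Odd.neg_one_zpow

lemma exists_mem_SL2_mul_swapGL_pow {g : GL (Fin 2) L} (hg : g ∈ Gbar L) :
    ∃ A ∈ SL2 L, ∃ ε : Fin 2, g = A * swapGL L ^ (ε : ℕ) := by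
  rcases det_eq_one_or_neg_one_of_mem_Gbar hg with h | h
  · exact ⟨g, mem_SL2_iff.2 h, 0, by simp⟩
  · refine ⟨g * swapGL L, mem_SL2_iff.2 (by simp [h, det_swapGL]), 1, ?_⟩
    simp [mul_assoc, ← sq, swapGL_sq]

lemma swapGL_notMem_SL2 (hchar : ringChar L ≠ 2) : swapGL L ∉ SL2 L := by
  rw [mem_SL2_iff, det_swapGL, Units.ext_iff]
  exact Ring.neg_one_ne_one_of_char_ne_two hchar

end

theorem Gbar_eq_SL2_semidirect_swap_general (L : Type*) [Field L]
    (hchar : ringChar L ≠ 2) :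
    SL2 L ≤ Gbar L
    ∧ ((SL2 L).subgroupOf (Gbar L)).Normal
    ∧ swapGL L ∈ Gbar L
    ∧ orderOf (swapGL L) = 2
    ∧ swapGL L ∉ SL2 L
    ∧ SL2 L ⊓ Subgroup.zpowers (swapGL L) = ⊥
    ∧ ∀ g ∈ Gbar L, ∃ A ∈ SL2 L, ∃ ε : Fin 2, g = A * swapGL L ^ (ε : ℕ) :=
  ⟨SL2_le_Gbar, SL2_normal.subgroupOf _, swapGL_mem_Gbar, orderOf_swapGL,
    swapGL_notMem_SL2 hchar,
    Subgroup.inf_zpowers_eq_bot_of_orderOf_eq_two orderOf_swapGL (swapGL_notMem_SL2 hchar),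
    fun _ => exists_mem_SL2_mul_swapGL_pow⟩

/-- For a finite field `L` of characteristic different from `2`, the group
`Ḡ` is the internal semidirect product of `SL(2, L)` by `⟨S₀⟩`: `SL(2, L)` is a normal
subgroup of `Ḡ`, `S₀ ∈ Ḡ` has order `2` and lies outside `SL(2, L)`, the intersection
`SL(2, L) ∩ ⟨S₀⟩` is trivial, and every element of `Ḡ` is of the form `A·S₀^ε` with
`A ∈ SL(2, L)` and `ε ∈ {0, 1}`. -/
theorem Gbar_eq_SL2_semidirect_swap (L : Type*) [Field L] [Fintype L]
    (hchar : ringChar L ≠ 2) :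
    SL2 L ≤ Gbar L
    ∧ ((SL2 L).subgroupOf (Gbar L)).Normal
    ∧ swapGL L ∈ Gbar L
    ∧ orderOf (swapGL L) = 2
    ∧ swapGL L ∉ SL2 L
    ∧ SL2 L ⊓ Subgroup.zpowers (swapGL L) = ⊥
    ∧ ∀ g ∈ Gbar L, ∃ A ∈ SL2 L, ∃ ε : Fin 2, g = A * swapGL L ^ (ε : ℕ) :=
  Gbar_eq_SL2_semidirect_swap_general L hchar
end

section
/- Let F be a finite field with |F| = Q and char(F) ≠ 2, let M ∈ GL(2, F) have irreducible characteristic polynomial over F and multiplicative order Q² − 1, and set H̄ = ⟨M^{Q−1}⟩. Then the action of H̄ on the set of 1-dimensional subspaces of F² has exactly two orbits, each of cardinality (Q + 1)/2. -/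
/-!
An irreducible characteristic polynomial leaves `M` without eigenvectors, so a matrix commuting
with `M` that kills a nonzero vector `v` also kills `M v`, hence vanishes (`v, M v` is a basis).
Consequently the `Q² - 1` powers of `M` act freely, hence regularly, on the nonzero vectors of
`F²`, and `M ^ Q`, a second root of the characteristic polynomial, is the conjugate
`trace M - M`, so that `M ^ (Q + 1) = det M` is scalar. Together, `M ^ z` fixes a line iff
`Q + 1 ∣ z`. For `g = M ^ (Q - 1)` this gives: `M ^ a • ℓ` lies in the `⟨g⟩`-orbit of `ℓ` iff `a`
is even (as `gcd (Q - 1, Q + 1) = 2` for odd `Q`), so the lines form the two orbits of `ℓ` and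
`M • ℓ`; and `g ^ n` fixes `ℓ` iff `(Q + 1) / 2 ∣ n`.
-/

open Module

theorem Nat.add_one_dvd_sub_one_mul_iff {q : ℕ} (hq : Odd q) (n : ℕ) :
    q + 1 ∣ (q - 1) * n ↔ (q + 1) / 2 ∣ n := by
  obtain ⟨r, rfl⟩ := hq
  rw [show 2 * r + 1 + 1 = 2 * (r + 1) by ring, show 2 * r + 1 - 1 = 2 * r by omega,
    Nat.mul_div_cancel_left _ two_pos, mul_assoc, Nat.mul_dvd_mul_iff_left two_pos]
  exact (Nat.coprime_self_add_left.mpr (Nat.coprime_one_left r)).dvd_mul_left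

theorem Int.exists_add_one_dvd_sub_one_mul_sub_iff {q : ℤ} (hq : Odd q) (c : ℤ) :
    (∃ j, q + 1 ∣ (q - 1) * j - c) ↔ 2 ∣ c := by
  constructor
  · rintro ⟨j, hj⟩
    have h2 : (2 : ℤ) ∣ (q - 1) * j := (hq.sub_odd odd_one).two_dvd.mul_right j
    exact (dvd_sub_right h2).mp (hq.add_one.two_dvd.trans hj)
  · rintro ⟨s, rfl⟩
    exact ⟨-s, -s, by ring⟩

namespace Matrix

variable {F : Type*} [Field F]

theorem mulVec_ne_smul_of_irreducible_charpoly {n : Type*} [Fintype n] [DecidableEq n]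
    (hn : Fintype.card n ≠ 1) {A : Matrix n n F} (hirr : Irreducible A.charpoly)
    {v : n → F} (hv : v ≠ 0) (c : F) : A *ᵥ v ≠ c • v := by
  intro h
  have hroot : A.charpoly.IsRoot c := by
    rw [← charpoly_toLin', ← Module.End.hasEigenvalue_iff_isRoot_charpoly]
    exact Module.End.hasEigenvalue_of_hasEigenvector
      (Module.End.hasEigenvector_iff.mpr ⟨by simpa [Module.End.mem_eigenspace_iff] using h, hv⟩)
  have hdeg := Polynomial.degree_eq_one_of_irreducible_of_root hirr hroot
  rw [charpoly_degree_eq_dim] at hdeg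
  exact hn (by exact_mod_cast hdeg)

theorem eq_zero_of_commute_of_mulVec_eq_zero {A N : Matrix (Fin 2) (Fin 2) F}
    (hirr : Irreducible A.charpoly) (hNA : Commute N A) {v : Fin 2 → F} (hv : v ≠ 0)
    (hNv : N *ᵥ v = 0) : N = 0 := by
  have hli : LinearIndependent F ![v, A *ᵥ v] :=
    (LinearIndependent.pair_iff' hv).mpr fun c h =>
      mulVec_ne_smul_of_irreducible_charpoly (by simp) hirr hv c h.symm
  let b := basisOfLinearIndependentOfCardEqFinrank hli (by simp)
  suffices toLin' N = 0 from toLin'.map_eq_zero_iff.mp this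
  refine b.ext fun i => ?_
  fin_cases i
  · simpa [b] using hNv
  · simp only [b, coe_basisOfLinearIndependentOfCardEqFinrank, Fin.mk_one, cons_val_one,
      cons_val_fin_one, toLin'_apply, LinearMap.zero_apply]
    rw [mulVec_mulVec, hNA.eq, ← mulVec_mulVec, hNv, mulVec_zero]

theorem eq_of_commute_of_mulVec_eq {A B C : Matrix (Fin 2) (Fin 2) F}
    (hirr : Irreducible A.charpoly) (hB : Commute B A) (hC : Commute C A) {v : Fin 2 → F}
    (hv : v ≠ 0) (h : B *ᵥ v = C *ᵥ v) : B = C :=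
  sub_eq_zero.mp <| eq_zero_of_commute_of_mulVec_eq_zero hirr (hB.sub_left hC) hv
    (by rw [sub_mulVec, h, sub_self])

theorem eq_zero_or_eq_zero_of_commute_of_mul_eq_zero {A B C : Matrix (Fin 2) (Fin 2) F}
    (hirr : Irreducible A.charpoly) (hB : Commute B A) (h : B * C = 0) :
    B = 0 ∨ C = 0 := by
  refine or_iff_not_imp_right.mpr fun hC => ?_
  obtain ⟨u, hu⟩ : ∃ u, C *ᵥ u ≠ 0 := by
    by_contra! hall
    exact hC (mulVec_injective (funext fun u => by simp [hall u]))
  exact eq_zero_of_commute_of_mulVec_eq_zero hirr hB hu (by rw [mulVec_mulVec, h, zero_mulVec])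

theorem aeval_charpoly_fin_two (A B : Matrix (Fin 2) (Fin 2) F) :
    Polynomial.aeval B A.charpoly = B ^ 2 - A.trace • B + A.det • 1 := by
  simp [charpoly_fin_two, Algebra.algebraMap_eq_smul_one]

variable [Fintype F]

theorem aeval_pow_card_charpoly {n : Type*} [Fintype n] [DecidableEq n] (A : Matrix n n F) :
    Polynomial.aeval (A ^ Fintype.card F) A.charpoly = 0 := by
  rw [← Polynomial.expand_aeval, FiniteField.expand_card, map_pow, aeval_self_charpoly,
    zero_pow Fintype.card_ne_zero]

theorem pow_card_eq_trace_smul_one_sub {A : Matrix (Fin 2) (Fin 2) F}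
    (hirr : Irreducible A.charpoly) (hA : A ^ Fintype.card F ≠ A) :
    A ^ Fintype.card F = A.trace • 1 - A := by
  set B := A ^ Fintype.card F
  have hB : Commute B A := (Commute.refl A).pow_left _
  have hBroot := aeval_pow_card_charpoly A
  have hAroot := aeval_self_charpoly A
  rw [aeval_charpoly_fin_two] at hBroot hAroot
  have hprod : (B - A) * (B + A - A.trace • 1) = 0 := by
    calc (B - A) * (B + A - A.trace • 1)
        = (B ^ 2 - A.trace • B + A.det • 1) - (A ^ 2 - A.trace • A + A.det • 1)
          + (B * A - A * B) := by
          simp only [sub_mul, mul_sub, mul_add, sq, mul_smul_comm, mul_one, smul_sub]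
          abel
      _ = 0 := by rw [hBroot, hAroot, hB.eq, sub_self, sub_self, add_zero]
  rcases eq_zero_or_eq_zero_of_commute_of_mul_eq_zero hirr (hB.sub_left (Commute.refl A)) hprod
    with h | h
  · exact absurd (sub_eq_zero.mp h) hA
  · rw [← sub_eq_zero, ← h]
    abel

theorem pow_card_add_one_eq_det_smul_one {A : Matrix (Fin 2) (Fin 2) F}
    (hirr : Irreducible A.charpoly) (hA : A ^ Fintype.card F ≠ A) :
    A ^ (Fintype.card F + 1) = A.det • 1 := by
  have hAroot := aeval_self_charpoly A
  rw [aeval_charpoly_fin_two] at hAroot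
  rw [pow_succ, pow_card_eq_trace_smul_one_sub hirr hA, eq_comm, ← sub_eq_zero, ← hAroot]
  simp only [sub_mul, smul_mul_assoc, one_mul, sq]
  abel

end Matrix

namespace Matrix.GeneralLinearGroup

section Action

variable {F : Type*} [Field F] {n : ℕ}

noncomputable instance : MulAction (GL (Fin n) F) (Submodule F (Fin n → F)) where
  smul := mapGL
  one_smul U := by
    change mapGL 1 U = U
    simp [mapGL]
  mul_smul A B U := by
    change mapGL (A * B) U = mapGL A (mapGL B U)
    simp [mapGL, Submodule.map_comp, toLin'_mul]

theorem smul_submodule_def (A : GL (Fin n) F) (U : Submodule F (Fin n → F)) :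
    A • U = mapGL A U := rfl

theorem smul_span_singleton (A : GL (Fin n) F) (v : Fin n → F) :
    A • Submodule.span F {v} = Submodule.span F {(A : Matrix (Fin n) (Fin n) F) *ᵥ v} := by
  rw [smul_submodule_def, mapGL, Submodule.map_span, Set.image_singleton, Matrix.toLin'_apply]

theorem finrank_smul (A : GL (Fin n) F) (U : Submodule F (Fin n → F)) :
    finrank F ↥(A • U) = finrank F U :=
  LinearEquiv.finrank_map_eq (toLin A).toLinearEquiv U

theorem smul_eq_self_of_val_eq_smul_one {A : GL (Fin n) F} {c : F} (hc : c ≠ 0)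
    (hA : (A : Matrix (Fin n) (Fin n) F) = c • 1) (U : Submodule F (Fin n → F)) : A • U = U := by
  rw [smul_submodule_def, mapGL, hA, map_smul, Submodule.map_smul _ _ _ hc, toLin'_one,
    Submodule.map_id]

end Action

variable {F : Type*} [Field F] [Fintype F] {M : GL (Fin 2) F}

theorem val_pow_card_ne_val (hord : orderOf M = Fintype.card F ^ 2 - 1) :
    (M : Matrix (Fin 2) (Fin 2) F) ^ Fintype.card F ≠ M := by
  intro h
  have hQ := Fintype.one_lt_card (α := F)
  have hM : M ^ (Fintype.card F - 1) = 1 := by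
    refine mul_right_cancel (b := M) (Units.ext ?_)
    rw [← pow_succ, Nat.sub_add_cancel hQ.le, Units.val_pow_eq_pow_val, h, one_mul]
  have hle := Nat.le_of_dvd (by omega) (orderOf_dvd_of_pow_eq_one hM)
  rw [hord] at hle
  have : 2 * Fintype.card F ≤ Fintype.card F ^ 2 := by nlinarith
  omega

theorem card_add_one_dvd_of_val_zpow_eq_smul_one (hord : orderOf M = Fintype.card F ^ 2 - 1)
    {z : ℤ} {c : F} (h : ((M ^ z : GL (Fin 2) F) : Matrix (Fin 2) (Fin 2) F) = c • 1) :
    (Fintype.card F + 1 : ℤ) ∣ z := by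
  have hc : c ≠ 0 := by
    rintro rfl
    simpa [h] using (M ^ z).isUnit
  have hpow : M ^ (z * (Fintype.card F - 1 : ℕ)) = 1 := by
    rw [_root_.zpow_mul, zpow_natCast]
    ext : 1
    rw [Units.val_pow_eq_pow_val, h, smul_pow, one_pow, FiniteField.pow_card_sub_one_eq_one c hc,
      one_smul, Units.val_one]
  have hdvd := orderOf_dvd_iff_zpow_eq_one.mpr hpow
  have hQ := Fintype.one_lt_card (α := F)
  rw [hord, Nat.cast_sub (Nat.one_le_pow _ _ (by omega)), Nat.cast_sub hQ.le] at hdvd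
  push_cast at hdvd
  rw [show (Fintype.card F : ℤ) ^ 2 - 1 = (Fintype.card F + 1) * (Fintype.card F - 1) by ring]
    at hdvd
  exact (mul_dvd_mul_iff_right (by omega)).mp hdvd

variable (M) in
structure IsSingerCycle : Prop where
  irreducible_charpoly : Irreducible (M : Matrix (Fin 2) (Fin 2) F).charpoly
  orderOf_eq : orderOf M = Fintype.card F ^ 2 - 1

namespace IsSingerCycle

theorem val_pow_card_add_one (hM : M.IsSingerCycle) :
    ((M ^ (Fintype.card F + 1) : GL (Fin 2) F) : Matrix (Fin 2) (Fin 2) F) =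
      (M : Matrix (Fin 2) (Fin 2) F).det • 1 := by
  rw [Units.val_pow_eq_pow_val, pow_card_add_one_eq_det_smul_one hM.irreducible_charpoly
    (val_pow_card_ne_val hM.orderOf_eq)]

theorem zpow_smul_eq_self_iff (hM : M.IsSingerCycle) {l : Submodule F (Fin 2 → F)}
    (hl : finrank F l = 1) (z : ℤ) : M ^ z • l = l ↔ (Fintype.card F + 1 : ℤ) ∣ z := by
  obtain ⟨v, hv, rfl⟩ :=
    (atom_iff_nonzero_span l).mp (Submodule.isAtom_iff_finrank_eq_one.mpr hl)
  constructor
  · intro h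
    have hmem : ((M ^ z : GL (Fin 2) F) : Matrix (Fin 2) (Fin 2) F) *ᵥ v ∈
        Submodule.span F {v} := by
      rw [← h, smul_span_singleton]
      exact Submodule.mem_span_singleton_self _
    obtain ⟨c, hc⟩ := Submodule.mem_span_singleton.mp hmem
    refine card_add_one_dvd_of_val_zpow_eq_smul_one hM.orderOf_eq (c := c) ?_
    refine eq_of_commute_of_mulVec_eq hM.irreducible_charpoly
      ((Commute.refl M).zpow_left z).units_val ((Commute.one_left _).smul_left c) hv ?_
    rw [smul_mulVec, one_mulVec, hc]
  · rintro ⟨s, rfl⟩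
    have hdet := ((isUnit_iff_isUnit_det _).mp M.isUnit).ne_zero
    have hfix : M ^ (Fintype.card F + 1) ∈ MulAction.stabilizer _ (Submodule.span F {v}) :=
      smul_eq_self_of_val_eq_smul_one hdet hM.val_pow_card_add_one _
    have := Subgroup.zpow_mem _ hfix s
    rwa [MulAction.mem_stabilizer_iff, ← zpow_natCast, ← _root_.zpow_mul, Nat.cast_succ] at this

theorem zpow_smul_eq_zpow_smul_iff (hM : M.IsSingerCycle) {l : Submodule F (Fin 2 → F)}
    (hl : finrank F l = 1) (a b : ℤ) :
    M ^ a • l = M ^ b • l ↔ (Fintype.card F + 1 : ℤ) ∣ a - b := by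
  rw [← hM.zpow_smul_eq_self_iff hl, sub_eq_neg_add, _root_.zpow_add, _root_.zpow_neg, mul_smul,
    inv_smul_eq_iff, eq_comm]

theorem exists_pow_mulVec_eq (hM : M.IsSingerCycle) {v w : Fin 2 → F} (hv : v ≠ 0)
    (hw : w ≠ 0) : ∃ k : ℕ, ((M ^ k : GL (Fin 2) F) : Matrix (Fin 2) (Fin 2) F) *ᵥ v = w := by
  classical
  let f : Fin (orderOf M) → {u : Fin 2 → F // u ≠ 0} := fun k =>
    ⟨((M ^ (k : ℕ) : GL (Fin 2) F) : Matrix (Fin 2) (Fin 2) F) *ᵥ v,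
      fun h => hv (mulVec_injective_iff_isUnit.mpr (M ^ (k : ℕ)).isUnit
        (by rw [h, mulVec_zero]))⟩
  have hf : Function.Injective f := fun i j hij =>
    Fin.ext <| pow_injOn_Iio_orderOf i.2 j.2 <| Units.ext <|
      eq_of_commute_of_mulVec_eq hM.irreducible_charpoly ((Commute.refl M).pow_left _).units_val
        ((Commute.refl M).pow_left _).units_val hv (congrArg Subtype.val hij)
  have hcard : Fintype.card (Fin (orderOf M)) = Fintype.card {u : Fin 2 → F // u ≠ 0} := by
    rw [Fintype.card_fin, hM.orderOf_eq, Fintype.card_subtype_compl, Fintype.card_subtype_eq,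
      Fintype.card_fun, Fintype.card_fin]
  obtain ⟨k, hk⟩ := ((Fintype.bijective_iff_injective_and_card f).mpr ⟨hf, hcard⟩).2 ⟨w, hw⟩
  exact ⟨k, congrArg Subtype.val hk⟩

theorem exists_zpow_smul_eq (hM : M.IsSingerCycle) {l l' : Submodule F (Fin 2 → F)}
    (hl : finrank F l = 1) (hl' : finrank F l' = 1) : ∃ k : ℤ, M ^ k • l = l' := by
  obtain ⟨v, hv, rfl⟩ :=
    (atom_iff_nonzero_span l).mp (Submodule.isAtom_iff_finrank_eq_one.mpr hl)
  obtain ⟨w, hw, rfl⟩ :=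
    (atom_iff_nonzero_span l').mp (Submodule.isAtom_iff_finrank_eq_one.mpr hl')
  obtain ⟨k, hk⟩ := hM.exists_pow_mulVec_eq hv hw
  exact ⟨k, by rw [zpow_natCast, smul_span_singleton, hk]⟩

theorem zpow_smul_mem_orbit_zpowers_pow_card_sub_one_iff (hM : M.IsSingerCycle)
    (hodd : Odd (Fintype.card F)) {l : Submodule F (Fin 2 → F)} (hl : finrank F l = 1) (a : ℤ) :
    M ^ a • l ∈ MulAction.orbit (Subgroup.zpowers (M ^ (Fintype.card F - 1))) l ↔ 2 ∣ a := by
  rw [MulAction.mem_orbit_iff, Subgroup.exists_zpowers]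
  simp only [Subgroup.mk_smul, ← zpow_natCast, ← _root_.zpow_mul,
    hM.zpow_smul_eq_zpow_smul_iff hl, Nat.cast_sub Fintype.card_pos, Nat.cast_one]
  exact Int.exists_add_one_dvd_sub_one_mul_sub_iff (by exact_mod_cast hodd) a

theorem card_orbit_zpowers_pow_card_sub_one (hM : M.IsSingerCycle)
    (hodd : Odd (Fintype.card F)) {l : Submodule F (Fin 2 → F)} (hl : finrank F l = 1) :
    Nat.card (MulAction.orbit (Subgroup.zpowers (M ^ (Fintype.card F - 1))) l) =
      (Fintype.card F + 1) / 2 := by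
  rw [Nat.card_congr (MulAction.orbitZPowersEquiv _ l), Nat.card_zmod, ← Nat.dvd_right_iff_eq]
  intro n
  rw [← MulAction.pow_smul_eq_iff_minimalPeriod_dvd, ← pow_mul, ← zpow_natCast,
    hM.zpow_smul_eq_self_iff hl, ← Nat.add_one_dvd_sub_one_mul_iff hodd]
  norm_cast

theorem setOf_orbit_zpowers_pow_card_sub_one_eq_pair (hM : M.IsSingerCycle)
    (hodd : Odd (Fintype.card F)) {l₀ : Submodule F (Fin 2 → F)} (hl₀ : finrank F l₀ = 1) :
    {Ω | ∃ l : Submodule F (Fin 2 → F), finrank F l = 1 ∧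
        Ω = MulAction.orbit (Subgroup.zpowers (M ^ (Fintype.card F - 1))) l} =
      {MulAction.orbit (Subgroup.zpowers (M ^ (Fintype.card F - 1))) l₀,
        MulAction.orbit (Subgroup.zpowers (M ^ (Fintype.card F - 1))) (M • l₀)} := by
  have hl₁ : finrank F ↥(M • l₀) = 1 := (finrank_smul M l₀).trans hl₀
  ext Ω
  constructor
  · rintro ⟨l, hl, rfl⟩
    obtain ⟨k, rfl⟩ := hM.exists_zpow_smul_eq hl₀ hl
    rcases Int.even_or_odd k with hk | hk
    · exact Or.inl (MulAction.orbit_eq_iff.mpr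
        ((hM.zpow_smul_mem_orbit_zpowers_pow_card_sub_one_iff hodd hl₀ k).mpr hk.two_dvd))
    · have hk' : M ^ k • l₀ = M ^ (k - 1) • M • l₀ := by
        rw [smul_smul, ← _root_.zpow_add_one, sub_add_cancel]
      exact Or.inr (MulAction.orbit_eq_iff.mpr (hk' ▸
        (hM.zpow_smul_mem_orbit_zpowers_pow_card_sub_one_iff hodd hl₁ _).mpr
          (hk.sub_odd odd_one).two_dvd))
  · rintro (rfl | rfl)
    exacts [⟨l₀, hl₀, rfl⟩, ⟨M • l₀, hl₁, rfl⟩]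

theorem orbit_zpowers_pow_card_sub_one_ne (hM : M.IsSingerCycle) (hodd : Odd (Fintype.card F))
    {l : Submodule F (Fin 2 → F)} (hl : finrank F l = 1) :
    MulAction.orbit (Subgroup.zpowers (M ^ (Fintype.card F - 1))) l ≠
      MulAction.orbit (Subgroup.zpowers (M ^ (Fintype.card F - 1))) (M • l) := by
  intro h
  have h2 := (hM.zpow_smul_mem_orbit_zpowers_pow_card_sub_one_iff hodd hl 1).mp
    (by rw [zpow_one]; exact MulAction.orbit_eq_iff.mp h.symm)
  exact absurd h2 (by decide)

end IsSingerCycle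

end Matrix.GeneralLinearGroup

theorem setOf_exists_mapGL_eq_orbit {F : Type*} [Field F] {n : ℕ} (H : Subgroup (GL (Fin n) F))
    (U : Submodule F (Fin n → F)) : {U' | ∃ A ∈ H, U' = mapGL A U} = MulAction.orbit H U := by
  ext U'
  simp only [Set.mem_ofPred_eq, MulAction.mem_orbit_iff, Subtype.exists, Subgroup.mk_smul,
    Matrix.GeneralLinearGroup.smul_submodule_def, exists_prop, eq_comm]

/-- Let `F` be a finite field with `|F| = Q` of odd characteristic,
`M ∈ GL(2, F)` a Singer cycle (irreducible characteristic polynomial and order `Q² − 1`),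
and `H̄ = ⟨M^{Q−1}⟩`. Then the action of `H̄` on the lines of `F²` has exactly two orbits,
each of cardinality `(Q + 1)/2`. -/
theorem singer_subgroup_two_orbits_on_lines_char_ne_two
    {F : Type*} [Field F] [Fintype F] (hchar : ringChar F ≠ 2)
    (M : GL (Fin 2) F)
    (hirr : Irreducible (Matrix.charpoly (M : Matrix (Fin 2) (Fin 2) F)))
    (hord : orderOf M = Fintype.card F ^ 2 - 1) :
    {Ω : Set (Submodule F (Fin 2 → F)) | ∃ l : Submodule F (Fin 2 → F), finrank F l = 1 ∧
        Ω = {l' | ∃ A ∈ Subgroup.zpowers (M ^ (Fintype.card F - 1)),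
          l' = mapGL A l}}.ncard = 2
    ∧ ∀ l : Submodule F (Fin 2 → F), finrank F l = 1 →
        {l' | ∃ A ∈ Subgroup.zpowers (M ^ (Fintype.card F - 1)),
          l' = mapGL A l}.ncard = (Fintype.card F + 1) / 2 := by
  have hM : M.IsSingerCycle := ⟨hirr, hord⟩
  have hodd : Odd (Fintype.card F) := Nat.odd_iff.mpr (FiniteField.odd_card_of_char_ne_two hchar)
  simp only [setOf_exists_mapGL_eq_orbit]
  obtain ⟨v, hv⟩ := exists_ne (0 : Fin 2 → F)
  have hl₀ := finrank_span_singleton (K := F) hv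
  refine ⟨?_, fun l hl => ?_⟩
  · rw [hM.setOf_orbit_zpowers_pow_card_sub_one_eq_pair hodd hl₀,
      Set.ncard_pair (hM.orbit_zpowers_pow_card_sub_one_ne hodd hl₀)]
  · rw [← Nat.card_coe_set_eq, hM.card_orbit_zpowers_pow_card_sub_one hodd hl]
end
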